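/- Let λ > 0, let c > 0, let a be a nonzero real number, let Δ ∈ ℝ, let T' ∈ ℝ, let t ≥ 0, and let D : ℝ → ℝ be a bounded measurable function. On a probability space let γ be a real random variable whose law is the exponential distribution with rate λ (i.e., with density s ↦ λ e^{−λs} on [0,∞)), let ρ be a random variable taking values in the non-negative integers whose law is the Poisson distribution with parameter c|a|/λ, and suppose γ and ρ are independent. Then E[ aΔ (T' − (1/λ) 1_{γ < t}) + (Sign(a)/c) · 1_{γ < t} · ρ · D(t − γ) ] = aΔ T' + a ∫_0^t (D(s) − Δ) e^{−λ(t−s)} ds, where Sign(x) equals 1 if x > 0, −1 if x < 0, and 0 if x = 0. -/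

import Mathlib

/-!
Condition on `γ = s`. As `ρ` is independent of `γ` with mean `c|a|/λ`, and `sign a * |a| = a`,
averaging over `ρ` turns the integrand into `aΔT' + (a/λ) 1_{s<t} (D(t - s) - Δ)`. Integrating
this against the density `λ e^{-λs}` and substituting `u = t - s` gives the right-hand side.
-/

open MeasureTheory ProbabilityTheory Real
open scoped NNReal Nat

lemma Real.sign_mul_abs (a : ℝ) : Real.sign a * |a| = a := by
  rcases lt_trichotomy a 0 with h | rfl | h
  · rw [Real.sign_of_neg h, abs_of_neg h]; ring
  · simp
  · rw [Real.sign_of_pos h, abs_of_pos h]; ring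

namespace ProbabilityTheory

lemma hasSum_mul_natCast_poissonMeasure (r : ℝ≥0) :
    HasSum (fun n : ℕ ↦ exp (-r) * r ^ n / n ! * n) r := by
  have hshift : (fun n : ℕ ↦ exp (-r) * r ^ (n + 1) / (n + 1) ! * ((n + 1 : ℕ) : ℝ))
      = fun n ↦ r * (exp (-r) * r ^ n / n !) := by
    ext n
    rw [Nat.factorial_succ, pow_succ]
    push_cast
    field_simp
  rw [← hasSum_nat_add_iff' 1, Finset.sum_range_one, Nat.cast_zero, mul_zero, sub_zero, hshift]
  simpa using (hasSum_one_poissonMeasure r).mul_left (r : ℝ)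

lemma integrable_natCast_poissonMeasure (r : ℝ≥0) :
    Integrable (fun n : ℕ ↦ (n : ℝ)) (poissonMeasure r) :=
  integrable_poissonMeasure_iff.2 <| by simpa using (hasSum_mul_natCast_poissonMeasure r).summable

lemma integral_natCast_poissonMeasure (r : ℝ≥0) :
    ∫ n, (n : ℝ) ∂poissonMeasure r = r := by
  simpa [integral_poissonMeasure] using (hasSum_mul_natCast_poissonMeasure r).tsum_eq

lemma integral_add_mul_natCast_poissonMeasure (r : ℝ≥0) (A B : ℝ) :
    ∫ n, (A + B * n) ∂poissonMeasure r = A + B * r := by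
  rw [integral_add (integrable_const A) ((integrable_natCast_poissonMeasure r).const_mul B),
    integral_const, integral_const_mul, integral_natCast_poissonMeasure]
  simp

lemma integral_ite_lt_expMeasure {lam t : ℝ} (hlam : 0 < lam) (ht : 0 ≤ t) (h : ℝ → ℝ) :
    ∫ s, (if s < t then h s else 0) ∂expMeasure lam
      = ∫ s in 0..t, h s * (lam * exp (-(lam * s))) := by
  change ∫ s, _ ∂volume.withDensity (exponentialPDF lam) = _
  rw [integral_withDensity_eq_integral_toReal_smul (f := exponentialPDF lam)
    (measurable_exponentialPDFReal lam).ennreal_ofReal (ae_of_all _ fun _ ↦ ENNReal.ofReal_lt_top)]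
  have hdensity : ∀ s, (exponentialPDF lam s).toReal • (if s < t then h s else 0)
      = (Set.Ico 0 t).indicator (fun s ↦ h s * (lam * exp (-(lam * s)))) s := by
    intro s
    rw [exponentialPDF_eq, ENNReal.toReal_ofReal (by positivity), Set.indicator_apply]
    by_cases h0 : 0 ≤ s <;> by_cases hst : s < t <;> simp [h0, hst, mul_comm]
  simp_rw [hdensity]
  rw [integral_indicator measurableSet_Ico, integral_Ico_eq_integral_Ioo,
    ← integral_Ioc_eq_integral_Ioo, ← intervalIntegral.integral_of_le ht]

lemma integral_ite_lt_comp_sub_expMeasure {lam t : ℝ} (hlam : 0 < lam) (ht : 0 ≤ t)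
    (h : ℝ → ℝ) :
    ∫ s, (if s < t then h (t - s) else 0) ∂expMeasure lam
      = lam * ∫ u in 0..t, h u * exp (-lam * (t - u)) := by
  rw [integral_ite_lt_expMeasure hlam ht, ← intervalIntegral.integral_const_mul]
  have hreflect := intervalIntegral.integral_comp_sub_left
    (fun u ↦ lam * (h u * exp (-lam * (t - u)))) (a := 0) (b := t) t
  rw [sub_self, sub_zero] at hreflect
  rw [← hreflect]
  congr with s
  ring_nf

theorem IndepFun.integral_comp_prodMk {Ω α β E : Type*} {_ : MeasurableSpace Ω}
    [MeasurableSpace α] [MeasurableSpace β] [NormedAddCommGroup E] [NormedSpace ℝ E]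
    {P : Measure Ω} [IsFiniteMeasure P] {μ : Measure α} {ν : Measure β}
    {X : Ω → α} {Y : Ω → β}
    (hXY : IndepFun X Y P) (hX : Measurable X) (hY : Measurable Y)
    (hXμ : P.map X = μ) (hYν : P.map Y = ν) {f : α × β → E} (hf : Integrable f (μ.prod ν)) :
    ∫ ω, f (X ω, Y ω) ∂P = ∫ x, ∫ y, f (x, y) ∂ν ∂μ := by
  subst hXμ hYν
  have hlaw := (indepFun_iff_map_prod_eq_prod_map_map hX.aemeasurable hY.aemeasurable).1 hXY
  rw [← integral_prod f hf, ← hlaw,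
    integral_map (hX.prodMk hY).aemeasurable (hlaw ▸ hf.aestronglyMeasurable)]

theorem IndepFun.integral_add_mul_poissonMeasure {Ω α : Type*} {_ : MeasurableSpace Ω}
    [MeasurableSpace α] {P : Measure Ω} [IsFiniteMeasure P] {μ : Measure α} {r : ℝ≥0}
    {X : Ω → α} {N : Ω → ℕ} (hXN : IndepFun X N P) (hX : Measurable X) (hN : Measurable N)
    (hXμ : P.map X = μ) (hNr : P.map N = poissonMeasure r) {A B : α → ℝ}
    (hA : Integrable A μ) (hB : Integrable B μ) :
    ∫ ω, A (X ω) + B (X ω) * N ω ∂P = ∫ x, A x + B x * r ∂μ := by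
  have : IsFiniteMeasure μ := hXμ ▸ inferInstance
  rw [hXN.integral_comp_prodMk (f := fun p ↦ A p.1 + B p.1 * p.2) hX hN hXμ hNr
    ((hA.comp_fst _).add (hB.mul_prod (integrable_natCast_poissonMeasure r)))]
  simp_rw [integral_add_mul_natCast_poissonMeasure]

end ProbabilityTheory

lemma integrable_ite_lt_of_bound {μ : Measure ℝ} [IsFiniteMeasure μ] {u : ℝ → ℝ}
    (hu : Measurable u) {C : ℝ} (hC : ∀ s, |u s| ≤ C) (t : ℝ) :
    Integrable (fun s ↦ if s < t then u s else 0) μ :=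
  .of_bound (hu.ite measurableSet_Iio measurable_const).aestronglyMeasurable C <|
    ae_of_all _ fun s ↦ by split_ifs <;> simp [(abs_nonneg _).trans (hC s), hC s]

theorem per_jump_expectation_identity_general
    {Ω : Type*} [MeasurableSpace Ω]
    (P : Measure Ω) [IsProbabilityMeasure P]
    (lam c a Δ T' : ℝ) (hlam : 0 < lam) (hc : 0 < c)
    (t : ℝ) (ht : 0 ≤ t)
    (D : ℝ → ℝ) (hDmeas : Measurable D) (hDbdd : ∃ C, ∀ u, |D u| ≤ C)
    (γ : Ω → ℝ) (hγmeas : Measurable γ)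
    (hγ : Measure.map γ P = expMeasure lam)
    (ρ : Ω → ℕ) (hρmeas : Measurable ρ)
    (hρ : Measure.map ρ P = poissonMeasure (Real.toNNReal (c * |a| / lam)))
    (hindep : IndepFun γ ρ P) :
    ∫ ω, (a * Δ * (T' - (1 / lam) * (if γ ω < t then (1 : ℝ) else 0))
        + (Real.sign a / c) * (if γ ω < t then (1 : ℝ) else 0) * (ρ ω : ℝ) * D (t - γ ω)) ∂P
      = a * Δ * T' + a * ∫ s in (0 : ℝ)..t, (D s - Δ) * Real.exp (-lam * (t - s)) := by
  obtain ⟨C, hC⟩ := hDbdd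
  have : IsProbabilityMeasure (expMeasure lam) := isProbabilityMeasure_expMeasure hlam
  have hDt : Measurable fun s ↦ D (t - s) := by fun_prop
  have hχ : Integrable (fun s ↦ if s < t then (1 : ℝ) else 0) (expMeasure lam) :=
    integrable_ite_lt_of_bound measurable_const (fun _ ↦ abs_one.le) t
  have hF : Integrable (fun s ↦ if s < t then D (t - s) else 0) (expMeasure lam) :=
    integrable_ite_lt_of_bound hDt (fun s ↦ hC (t - s)) t
  have hG : Integrable (fun s ↦ if s < t then D (t - s) - Δ else 0) (expMeasure lam) :=
    integrable_ite_lt_of_bound (C := C + |Δ|) (hDt.sub_const Δ)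
      (fun s ↦ (abs_sub _ _).trans (by gcongr; exact hC _)) t
  have hκ : Real.sign a / c * (c * |a| / lam).toNNReal = a / lam := by
    rw [Real.coe_toNNReal _ (by positivity)]
    field_simp
    linear_combination Real.sign_mul_abs a
  calc _ = ∫ ω, a * Δ * T' - a * Δ / lam * (if γ ω < t then 1 else 0)
        + Real.sign a / c * (if γ ω < t then D (t - γ ω) else 0) * ρ ω ∂P := by
        congr with ω
        split_ifs <;> ring
    _ = ∫ s, a * Δ * T' - a * Δ / lam * (if s < t then 1 else 0)
        + Real.sign a / c * (if s < t then D (t - s) else 0) * (c * |a| / lam).toNNReal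
          ∂expMeasure lam :=
      hindep.integral_add_mul_poissonMeasure hγmeas hρmeas hγ hρ
        ((integrable_const _).sub (hχ.const_mul _)) (hF.const_mul _)
    _ = ∫ s, a * Δ * T' + a / lam * (if s < t then D (t - s) - Δ else 0) ∂expMeasure lam := by
        congr with s
        split_ifs
        · linear_combination D (t - s) * hκ
        · ring
    _ = _ := by
        rw [integral_add (integrable_const _) (hG.const_mul _), integral_const, integral_const_mul,
          integral_ite_lt_comp_sub_expMeasure hlam ht (fun u ↦ D u - Δ)]
        simp only [probReal_univ, one_smul]
        field_simp

/-- The key per-jump expectation identity underlying the unbiasedness of the Poisson Path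
estimator (Proposition A.1): with `γ` exponential of rate `λ` and `ρ` Poisson of parameter
`c|a|/λ`, independent of each other,
`E[aΔ(T' − (1/λ)1_{γ<t}) + (Sign(a)/c) 1_{γ<t} ρ D(t − γ)]
  = aΔT' + a ∫_0^t (D(s) − Δ) e^{−λ(t−s)} ds`. -/
theorem per_jump_expectation_identity
    {Ω : Type*} [MeasurableSpace Ω]
    (P : Measure Ω) [IsProbabilityMeasure P]
    (lam c a Δ T' : ℝ) (hlam : 0 < lam) (hc : 0 < c) (ha : a ≠ 0)
    (t : ℝ) (ht : 0 ≤ t)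
    (D : ℝ → ℝ) (hDmeas : Measurable D) (hDbdd : ∃ C, ∀ u, |D u| ≤ C)
    (γ : Ω → ℝ) (hγmeas : Measurable γ)
    (hγ : Measure.map γ P = expMeasure lam)
    (ρ : Ω → ℕ) (hρmeas : Measurable ρ)
    (hρ : Measure.map ρ P = poissonMeasure (Real.toNNReal (c * |a| / lam)))
    (hindep : IndepFun γ ρ P) :
    ∫ ω, (a * Δ * (T' - (1 / lam) * (if γ ω < t then (1 : ℝ) else 0))
        + (Real.sign a / c) * (if γ ω < t then (1 : ℝ) else 0) * (ρ ω : ℝ) * D (t - γ ω)) ∂P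
      = a * Δ * T' + a * ∫ s in (0 : ℝ)..t, (D s - Δ) * Real.exp (-lam * (t - s)) :=
  per_jump_expectation_identity_general P lam c a Δ T' hlam hc t ht D hDmeas hDbdd γ hγmeas hγ ρ
    hρmeas hρ hindep
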